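/- arXiv:2107.06654 — 5 statements merged into one kernel-verified Lean document; each statement's English description precedes it below -/
import Mathlib

section
/- Let ν be a Q-excessive measure on a countable set S (i.e., νQ ≤ ν pointwise, ν locally finite) with Q nonnegative and Green's function G = Σ_n Q^n finite. Set ν^{pot} = ν(I − Q) (i.e., ν^{pot}(x) = ν(x) − Σ_y ν(y) Q(y,x) ≥ 0) and ν^{inv} = ν − ν^{pot}G. Then ν^{inv} is Q-invariant: ν^{inv}Q = ν^{inv}, and ν = ν^{inv} + ν^{pot}G. -/
open scoped ENNReal

/-- Entrywise matrix powers of a nonnegative kernel `Q` on a countable set `S`. -/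
noncomputable def qpow {S : Type*} [DecidableEq S] (Q : S → S → ℝ≥0∞) : ℕ → S → S → ℝ≥0∞
  | 0 => fun x y => if x = y then 1 else 0
  | n + 1 => fun x y => ∑' z, Q x z * qpow Q n z y

/-- Green's function `G = Σ_{n ≥ 0} Q^n` (entrywise, in `ℝ≥0∞`). -/
noncomputable def green {S : Type*} [DecidableEq S] (Q : S → S → ℝ≥0∞) (x y : S) : ℝ≥0∞ :=
  ∑' n, qpow Q n x y

section aux

set_option linter.unusedSectionVars false

open MeasureTheory

variable {S : Type*} [Countable S] [DecidableEq S]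

lemma qpow_zero (Q : S → S → ℝ≥0∞) (x y : S) :
    qpow Q 0 x y = if x = y then 1 else 0 := rfl

lemma qpow_succ (Q : S → S → ℝ≥0∞) (n : ℕ) (x y : S) :
    qpow Q (n + 1) x y = ∑' z, Q x z * qpow Q n z y := rfl

lemma qpow_succ_right (Q : S → S → ℝ≥0∞) (n : ℕ) (x y : S) :
    qpow Q (n + 1) x y = ∑' z, qpow Q n x z * Q z y := by
  induction n generalizing x y with
  | zero =>
      rw [qpow_succ]
      rw [tsum_eq_single y (by intro z hz; simp [qpow_zero, hz]),
          tsum_eq_single x (by intro z hz; simp [qpow_zero, Ne.symm hz])]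
      simp [qpow_zero]
  | succ n ih =>
      rw [qpow_succ]
      calc ∑' z, Q x z * qpow Q (n + 1) z y
          = ∑' z, ∑' w, Q x z * (qpow Q n z w * Q w y) := by
            refine tsum_congr fun z => ?_
            rw [ih, ← ENNReal.tsum_mul_left]
        _ = ∑' w, ∑' z, Q x z * (qpow Q n z w * Q w y) := ENNReal.tsum_comm
        _ = ∑' w, qpow Q (n + 1) x w * Q w y := by
            refine tsum_congr fun w => ?_
            rw [qpow_succ, ← ENNReal.tsum_mul_right]
            exact tsum_congr fun z => (mul_assoc _ _ _).symm

lemma qpow_one (Q : S → S → ℝ≥0∞) (x y : S) : qpow Q 1 x y = Q x y := by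
  rw [qpow_succ, tsum_eq_single y (by intro z hz; simp [qpow_zero, hz])]
  simp [qpow_zero]

lemma qpow_le_green (Q : S → S → ℝ≥0∞) (n : ℕ) (x y : S) :
    qpow Q n x y ≤ green Q x y :=
  ENNReal.le_tsum n

/-- `∑' (f - g) = ∑' f - ∑' g` in `ℝ≥0∞` over an arbitrary index type. -/
lemma tsum_sub' {ι : Type*} {f g : ι → ℝ≥0∞} (hg : ∑' i, g i ≠ ⊤) (hle : ∀ i, g i ≤ f i) :
    ∑' i, (f i - g i) = ∑' i, f i - ∑' i, g i := by
  refine ENNReal.eq_sub_of_add_eq hg ?_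
  rw [← ENNReal.tsum_add]
  exact tsum_congr fun i => tsub_add_cancel_of_le (hle i)

end aux

open MeasureTheory

/-- Riesz decomposition of a `Q`-excessive measure:
`ν^{inv} = ν − ν^{pot}G` is `Q`-invariant and `ν = ν^{inv} + ν^{pot}G`. -/
theorem excessive_riesz_decomposition {S : Type*} [Countable S] [DecidableEq S]
    (Q : S → S → ℝ≥0∞) (ν : S → ℝ≥0∞)
    (hG : ∀ x y, green Q x y < ⊤) (hν : ∀ x, ν x < ⊤)
    (hexc : ∀ x, ∑' y, ν y * Q y x ≤ ν x) :
    let νpot : S → ℝ≥0∞ := fun x => ν x - ∑' y, ν y * Q y x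
    let νinv : S → ℝ≥0∞ := fun x => ν x - ∑' z, νpot z * green Q z x
    (∀ x, ∑' y, νinv y * Q y x = νinv x) ∧
      (∀ x, ν x = νinv x + ∑' z, νpot z * green Q z x) := by
  intro νpot νinv
  -- the iterates a n x = (ν Qⁿ)(x)
  let a : ℕ → S → ℝ≥0∞ := fun n x => ∑' y, ν y * qpow Q n y x
  have hqfin : ∀ n (y x : S), qpow Q n y x ≠ ⊤ :=
    fun n y x => ((qpow_le_green Q n y x).trans_lt (hG y x)).ne
  have hQfin : ∀ y x : S, Q y x ≠ ⊤ := by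
    intro y x; rw [← qpow_one Q y x]; exact hqfin 1 y x
  have ha0 : ∀ x, a 0 x = ν x := by
    intro x
    show (∑' y, ν y * qpow Q 0 y x) = ν x
    rw [tsum_eq_single x (by intro z hz; simp [qpow_zero, hz])]
    simp [qpow_zero]
  -- a (n+1) x = Σ_z (νQ)(z) qⁿ(z,x)
  have hsuccL : ∀ n x, a (n + 1) x = ∑' z, (∑' y, ν y * Q y z) * qpow Q n z x := by
    intro n x
    show (∑' y, ν y * qpow Q (n + 1) y x) = _
    calc ∑' y, ν y * qpow Q (n + 1) y x
        = ∑' y, ∑' z, ν y * Q y z * qpow Q n z x := by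
          refine tsum_congr fun y => ?_
          rw [qpow_succ, ← ENNReal.tsum_mul_left]
          exact tsum_congr fun z => (mul_assoc _ _ _).symm
      _ = ∑' z, ∑' y, ν y * Q y z * qpow Q n z x := ENNReal.tsum_comm
      _ = ∑' z, (∑' y, ν y * Q y z) * qpow Q n z x := by
          refine tsum_congr fun z => ?_
          rw [ENNReal.tsum_mul_right]
  -- a (n+1) x = Σ_y a n y * Q(y,x)
  have hsuccR : ∀ n x, a (n + 1) x = ∑' y, a n y * Q y x := by
    intro n x
    show (∑' y, ν y * qpow Q (n + 1) y x) = _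
    calc ∑' y, ν y * qpow Q (n + 1) y x
        = ∑' y, ∑' z, ν y * qpow Q n y z * Q z x := by
          refine tsum_congr fun y => ?_
          rw [qpow_succ_right, ← ENNReal.tsum_mul_left]
          exact tsum_congr fun z => (mul_assoc _ _ _).symm
      _ = ∑' z, ∑' y, ν y * qpow Q n y z * Q z x := ENNReal.tsum_comm
      _ = ∑' z, (∑' y, ν y * qpow Q n y z) * Q z x := by
          refine tsum_congr fun z => ?_
          rw [ENNReal.tsum_mul_right]
  have hanti : ∀ n x, a (n + 1) x ≤ a n x := by
    intro n x
    rw [hsuccL]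
    exact Summable.tsum_le_tsum (fun z => mul_le_mul_left (hexc z) _)
      ENNReal.summable ENNReal.summable
  have hanti' : ∀ x, Antitone fun n => a n x :=
    fun x => antitone_nat_of_succ_le fun n => hanti n x
  have hale : ∀ n x, a n x ≤ ν x := fun n x => (hanti' x (Nat.zero_le n)).trans (ha0 x).le
  -- ν^{pot} Qⁿ = aₙ − aₙ₊₁
  have hpotn : ∀ n x, ∑' z, νpot z * qpow Q n z x = a n x - a (n + 1) x := by
    intro n x
    have h1 : ∀ z, νpot z * qpow Q n z x
        = ν z * qpow Q n z x - (∑' y, ν y * Q y z) * qpow Q n z x := by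
      intro z
      exact ENNReal.sub_mul fun _ _ => hqfin n z x
    calc ∑' z, νpot z * qpow Q n z x
        = ∑' z, (ν z * qpow Q n z x - (∑' y, ν y * Q y z) * qpow Q n z x) :=
          tsum_congr h1
      _ = (∑' z, ν z * qpow Q n z x) - ∑' z, (∑' y, ν y * Q y z) * qpow Q n z x := by
          refine tsum_sub' ?_ fun z => mul_le_mul_left (hexc z) _
          rw [← hsuccL]
          exact ((hale (n + 1) x).trans_lt (hν x)).ne
      _ = a n x - a (n + 1) x := by rw [← hsuccL]
  -- ν^{pot} G = ν − ⨅ₙ aₙ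
  have hpotG : ∀ x, ∑' z, νpot z * green Q z x = ν x - ⨅ n, a n x := by
    intro x
    have hpartial : ∀ N, ∑ n ∈ Finset.range N, (a n x - a (n + 1) x) = a 0 x - a N x := by
      intro N
      induction N with
      | zero => simp
      | succ N ih =>
          rw [Finset.sum_range_succ, ih,
            tsub_add_tsub_cancel (hanti' x (Nat.zero_le N)) (hanti N x)]
    calc ∑' z, νpot z * green Q z x
        = ∑' z, ∑' n, νpot z * qpow Q n z x := by
          refine tsum_congr fun z => ?_
          rw [green, ENNReal.tsum_mul_left]
      _ = ∑' n, ∑' z, νpot z * qpow Q n z x := ENNReal.tsum_comm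
      _ = ∑' n, (a n x - a (n + 1) x) := tsum_congr fun n => hpotn n x
      _ = ⨆ N, ∑ n ∈ Finset.range N, (a n x - a (n + 1) x) := ENNReal.tsum_eq_iSup_nat
      _ = ⨆ N, (a 0 x - a N x) := iSup_congr hpartial
      _ = a 0 x - ⨅ N, a N x := ENNReal.sub_iInf.symm
      _ = ν x - ⨅ N, a N x := by rw [ha0]
  have hinfle : ∀ x, (⨅ n, a n x) ≤ ν x := fun x => (iInf_le _ 0).trans (ha0 x).le
  have hinv : ∀ x, νinv x = ⨅ n, a n x := by
    intro x
    show ν x - ∑' z, νpot z * green Q z x = _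
    rw [hpotG x, ENNReal.sub_sub_cancel (hν x).ne (hinfle x)]
  constructor
  · -- invariance
    intro x
    letI : MeasurableSpace S := ⊤
    haveI : MeasurableSingletonClass S := ⟨fun _ => trivial⟩
    have key : ∑' y, (⨅ n, a n y) * Q y x = ⨅ n, ∑' y, a n y * Q y x := by
      have h1 : ∀ y, (⨅ n, a n y) * Q y x = ⨅ n, a n y * Q y x := fun y =>
        ENNReal.iInf_mul fun h => absurd h (hQfin y x)
      calc ∑' y, (⨅ n, a n y) * Q y x
          = ∑' y, ⨅ n, a n y * Q y x := tsum_congr h1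
        _ = ∫⁻ y, ⨅ n, a n y * Q y x ∂Measure.count := (lintegral_count _).symm
        _ = ⨅ n, ∫⁻ y, a n y * Q y x ∂Measure.count := by
            refine lintegral_iInf (fun n _ _ => trivial)
              (fun n m hnm y => mul_le_mul_left (hanti' y hnm) _) ?_
            rw [lintegral_count]
            have hle : ∑' y, a 0 y * Q y x ≤ ν x :=
              le_trans (le_of_eq (tsum_congr fun y => by rw [ha0])) (hexc x)
            exact (hle.trans_lt (hν x)).ne
        _ = ⨅ n, ∑' y, a n y * Q y x := iInf_congr fun n => lintegral_count _
    calc ∑' y, νinv y * Q y x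
        = ∑' y, (⨅ n, a n y) * Q y x := tsum_congr fun y => by rw [hinv]
      _ = ⨅ n, ∑' y, a n y * Q y x := key
      _ = ⨅ n, a (n + 1) x := iInf_congr fun n => (hsuccR n x).symm
      _ = ⨅ n, a n x :=
          le_antisymm (le_iInf fun n => (iInf_le _ n).trans (hanti n x))
            (le_iInf fun n => iInf_le _ (n + 1))
      _ = νinv x := (hinv x).symm
  · intro x
    rw [hinv x, hpotG x, add_tsub_cancel_of_le (hinfle x)]
end

section
/- Let Q be nonnegative on countable S with finite Green's function G, and let B ⊂ S be finite. Define Q^B(x,y) = Σ_{n≥1} Σ over paths x = x_0, x_1, …, x_n = y with x_1,…,x_{n-1} ∉ B of Q(x_0,x_1)⋯Q(x_{n-1},x_n), for x,y ∈ B (the first-return kernel to B). Then the restriction G|_{B×B} is the Green's function of Q^B, i.e., G|_{B×B} = Σ_{k≥0} (Q^B)^k. -/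
/-!
For any kernel `P`, `green P` applied to a source `g` is the least `f` with `g + P f ≤ f`:
by induction, its partial sums stay below every such `f`. Let `h` be the Green function of `Q`
killed on `B`. For `x ∈ B`, a step of `Q^B` from `x` is a step of `Q` followed by `h` with
targets in `B`. Minimality for the killed kernel gives `h (1_B G(·,y)) ≤ G(·,y)`, so the columns
of `G` are supersolutions for `Q^B`. Conversely, `h (1_B F)` is a supersolution for `Q` when `F`
is a column of `Σ_k (Q^B)^k`.
-/

open scoped ENNReal

/-- The first-return kernel `Q^B` to a finite set `B`:
`Q^B(x,y) = Σ_{n≥1} Σ_{x_1,…,x_{n-1} ∉ B} Q(x,x_1)⋯Q(x_{n-1},y)` for `x, y ∈ B`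
(and `0` otherwise). -/
noncomputable def retKer {S : Type*} [DecidableEq S] (Q : S → S → ℝ≥0∞) (B : Finset S)
    (x y : S) : ℝ≥0∞ :=
  if x ∈ B ∧ y ∈ B then
    ∑' (m : ℕ), ∑' z, Q x z * qpow (fun u v => if u ∈ B then 0 else Q u v) m z y
  else 0

section KernelApply

variable {S : Type*}

noncomputable def kernelApply (P : S → S → ℝ≥0∞) (f : S → ℝ≥0∞) (x : S) : ℝ≥0∞ :=
  ∑' z, P x z * f z

lemma kernelApply_mono (P : S → S → ℝ≥0∞) {f g : S → ℝ≥0∞} (h : f ≤ g) :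
    kernelApply P f ≤ kernelApply P g :=
  fun _ => ENNReal.tsum_le_tsum fun z => mul_le_mul_right (h z) _

lemma kernelApply_kernelApply (P A : S → S → ℝ≥0∞) (f : S → ℝ≥0∞) :
    kernelApply P (kernelApply A f) = kernelApply (fun x y => ∑' z, P x z * A z y) f := by
  funext x
  simp only [kernelApply, ← ENNReal.tsum_mul_left, ← ENNReal.tsum_mul_right, mul_assoc]
  exact ENNReal.tsum_comm

lemma kernelApply_tsum {ι : Type*} (P : S → S → ℝ≥0∞) (f : ι → S → ℝ≥0∞) :
    kernelApply P (fun z => ∑' i, f i z) = fun x => ∑' i, kernelApply P (f i) x := by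
  funext x
  simp only [kernelApply, ← ENNReal.tsum_mul_left]
  exact ENNReal.tsum_comm

lemma kernelApply_finsetSum {ι : Type*} (P : S → S → ℝ≥0∞) (s : Finset ι) (f : ι → S → ℝ≥0∞) :
    kernelApply P (∑ i ∈ s, f i) = ∑ i ∈ s, kernelApply P (f i) := by
  funext x
  simp only [kernelApply, Finset.sum_apply, Finset.mul_sum]
  exact Summable.tsum_finsetSum fun _ _ => ENNReal.summable

end KernelApply

section Green

variable {S : Type*} [DecidableEq S]

lemma kernelApply_ite_eq (A : S → S → ℝ≥0∞) (y : S) :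
    kernelApply A (fun z => if z = y then 1 else 0) = fun x => A x y := by
  funext x
  simp [kernelApply]

lemma kernelApply_qpow_zero (P : S → S → ℝ≥0∞) (f : S → ℝ≥0∞) :
    kernelApply (qpow P 0) f = f := by
  funext x
  simp [kernelApply, qpow]

lemma kernelApply_qpow_succ (P : S → S → ℝ≥0∞) (n : ℕ) (f : S → ℝ≥0∞) :
    kernelApply (qpow P (n + 1)) f = kernelApply P (kernelApply (qpow P n) f) := by
  rw [kernelApply_kernelApply]
  rfl

lemma kernelApply_green (P : S → S → ℝ≥0∞) (f : S → ℝ≥0∞) :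
    kernelApply (green P) f = fun x => ∑' n, kernelApply (qpow P n) f x := by
  funext x
  simp only [kernelApply, green, ← ENNReal.tsum_mul_right]
  exact ENNReal.tsum_comm

lemma kernelApply_green_eq (P : S → S → ℝ≥0∞) (g : S → ℝ≥0∞) :
    kernelApply (green P) g = g + kernelApply P (kernelApply (green P) g) := by
  rw [kernelApply_green, kernelApply_tsum]
  funext x
  rw [tsum_eq_zero_add' ENNReal.summable, kernelApply_qpow_zero]
  simp only [kernelApply_qpow_succ, Pi.add_apply]

lemma kernelApply_green_le {P : S → S → ℝ≥0∞} {g f : S → ℝ≥0∞}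
    (h : g + kernelApply P f ≤ f) : kernelApply (green P) g ≤ f := by
  have partialSum_le : ∀ N, ∑ n ∈ Finset.range N, kernelApply (qpow P n) g ≤ f := by
    intro N
    induction N with
    | zero => simp
    | succ N ih =>
      calc ∑ n ∈ Finset.range (N + 1), kernelApply (qpow P n) g
          = g + kernelApply P (∑ n ∈ Finset.range N, kernelApply (qpow P n) g) := by
            rw [Finset.sum_range_succ', kernelApply_finsetSum, kernelApply_qpow_zero, add_comm]
            simp only [kernelApply_qpow_succ]
        _ ≤ g + kernelApply P f := by gcongr; exact kernelApply_mono P ih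
        _ ≤ f := h
  intro x
  rw [kernelApply_green]
  exact ENNReal.tsum_le_of_sum_range_le fun N => by simpa using partialSum_le N x

lemma green_eq_ite_add (P : S → S → ℝ≥0∞) (x y : S) :
    green P x y = (if x = y then 1 else 0) + kernelApply P (fun z => green P z y) x := by
  have h := congrFun (kernelApply_green_eq P fun z => if z = y then 1 else 0) x
  rwa [kernelApply_ite_eq] at h

lemma ite_le_green (P : S → S → ℝ≥0∞) (x y : S) : (if x = y then 1 else 0) ≤ green P x y :=
  (green_eq_ite_add P x y).symm ▸ le_self_add

lemma kernelApply_green_le_green (P : S → S → ℝ≥0∞) (x y : S) :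
    kernelApply P (fun z => green P z y) x ≤ green P x y :=
  (green_eq_ite_add P x y).symm ▸ le_add_self

end Green

section FirstReturn

variable {S : Type*} [DecidableEq S] (Q : S → S → ℝ≥0∞) (B : Finset S)

noncomputable def killOn : S → S → ℝ≥0∞ :=
  fun u v => if u ∈ B then 0 else Q u v

lemma kernelApply_killOn (f : S → ℝ≥0∞) (x : S) :
    kernelApply (killOn Q B) f x = if x ∈ B then 0 else kernelApply Q f x := by
  by_cases hx : x ∈ B <;> simp [kernelApply, killOn, hx]

lemma retKer_of_notMem_left {x : S} (hx : x ∉ B) (z : S) : retKer Q B x z = 0 := by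
  simp [retKer, hx]

lemma kernelApply_retKer_of_mem {x : S} (hx : x ∈ B) (φ : S → ℝ≥0∞) :
    kernelApply (retKer Q B) φ x =
      kernelApply Q (kernelApply (green (killOn Q B)) ((B : Set S).indicator φ)) x := by
  rw [kernelApply_kernelApply]
  refine tsum_congr fun z => ?_
  by_cases hz : z ∈ B
  · rw [retKer, if_pos ⟨hx, hz⟩, Set.indicator_of_mem (Finset.mem_coe.2 hz), ENNReal.tsum_comm]
    simp only [green, ENNReal.tsum_mul_left]
    rfl
  · simp [retKer, hz]

lemma kernelApply_green_killOn_indicator_le {f : S → ℝ≥0∞}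
    (hf : ∀ x ∉ B, kernelApply Q f x ≤ f x) :
    kernelApply (green (killOn Q B)) ((B : Set S).indicator f) ≤ f :=
  kernelApply_green_le fun x => by
    by_cases hx : x ∈ B
    · simp [kernelApply_killOn, hx]
    · simpa [kernelApply_killOn, hx] using hf x hx

lemma green_retKer_le_green (x y : S) :
    green (retKer Q B) x y ≤ green Q x y := by
  suffices h : (fun z => if z = y then 1 else 0) + kernelApply (retKer Q B) (fun z => green Q z y)
      ≤ fun z => green Q z y by
    simpa [kernelApply_ite_eq] using kernelApply_green_le h x
  intro w
  by_cases hw : w ∈ B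
  · have first_entry := kernelApply_green_killOn_indicator_le Q B
      fun w _ => kernelApply_green_le_green Q w y
    calc (if w = y then 1 else 0) + kernelApply (retKer Q B) (fun z => green Q z y) w
        ≤ (if w = y then 1 else 0) + kernelApply Q (fun z => green Q z y) w := by
          rw [kernelApply_retKer_of_mem Q B hw]
          gcongr
          exact kernelApply_mono Q first_entry w
      _ = green Q w y := (green_eq_ite_add Q w y).symm
  · simpa [kernelApply, retKer_of_notMem_left Q B hw] using ite_le_green Q w y

lemma green_le_green_retKer {x y : S} (hx : x ∈ B) (hy : y ∈ B) :
    green Q x y ≤ green (retKer Q B) x y := by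
  set F := fun z => green (retKer Q B) z y
  set f := kernelApply (green (killOn Q B)) ((B : Set S).indicator F)
  have hf : f = (B : Set S).indicator F + kernelApply (killOn Q B) f := kernelApply_green_eq _ _
  have hfB : ∀ w ∈ B, f w = F w := fun w hw => by
    rw [hf]
    simp [kernelApply_killOn, hw]
  have supersolution : (fun z => if z = y then 1 else 0) + kernelApply Q f ≤ f := by
    intro w
    by_cases hw : w ∈ B
    · have return_step : kernelApply Q f w = kernelApply (retKer Q B) F w :=
        (kernelApply_retKer_of_mem Q B hw F).symm
      rw [Pi.add_apply, return_step, hfB w hw]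
      exact (green_eq_ite_add (retKer Q B) w y).symm.le
    · have hwy : w ≠ y := fun h => hw (h ▸ hy)
      rw [Pi.add_apply, congrFun hf w]
      simp [kernelApply_killOn, hw, hwy]
  simpa [kernelApply_ite_eq, hfB x hx] using kernelApply_green_le supersolution x

end FirstReturn

theorem green_restrict_eq_green_retKer_general {S : Type*} [DecidableEq S]
    (Q : S → S → ℝ≥0∞) (B : Finset S) :
    ∀ x ∈ B, ∀ y ∈ B, green Q x y = ∑' k, qpow (retKer Q B) k x y :=
  fun x hx y hy => le_antisymm (green_le_green_retKer Q B hx hy) (green_retKer_le_green Q B x y)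

/-- `G|_{B×B}` is the Green's function of the first-return kernel `Q^B`. -/
theorem green_restrict_eq_green_retKer {S : Type*} [Countable S] [DecidableEq S]
    (Q : S → S → ℝ≥0∞) (hG : ∀ x y, green Q x y < ⊤) (B : Finset S) :
    ∀ x ∈ B, ∀ y ∈ B, green Q x y = ∑' k, qpow (retKer Q B) k x y :=
  green_restrict_eq_green_retKer_general Q B
end

section
/- Let Q be nonnegative with finite Green's function on countable S, B a finite norming region, h(x) = E^x[#H_B] the expected number of B-entrance individuals, P_h the h-transformed chain with kernel p^h(x,y) = 1_{B^c}(x) q(x,y)h(y)/h(x), and for x ∈ B^c let μ^{(x)}(y) = h(x)·E_h^x[Σ_{n≥0} 1_{{y}}(X_n)] be h(x) times the P_h-occupation measure started at x. Then for all y ∈ S: G(x,y) = 1_{B^c}(y)·μ^{(x)}(y)/h(y) + Σ_{z∈B} μ^{(x)}(z)·G(z,y). -/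
open scoped ENNReal

/-- The `h`-transformed kernel `p^h(x,y) = 1_{B^c}(x) · Q(x,y) h(y) / h(x)`. -/
noncomputable def phKer {S : Type*} [DecidableEq S] (Q : S → S → ℝ≥0∞) (B : Finset S)
    (h : S → ℝ≥0∞) (x y : S) : ℝ≥0∞ :=
  if x ∈ B then 0 else Q x y * h y / h x

/-!
Since `p^h` vanishes on the rows of `B`, it is the Doob transform of the kernel `K` obtained from
`Q` by killing the rows of `B`; conjugating by `h` gives `h(x) g_h(x,y) = G_K(x,y) h(y)`, and
`h = 1` on `B`. The theorem is thus the first-entrance decomposition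
`G(x,y) = 1_{B^c}(y) G_K(x,y) + Σ_{z∈B} G_K(x,z) G(z,y)`, obtained by splitting each path of
`Q^n` at its first visit to `B` and summing the resulting Cauchy products over `n`.
-/

open Finset

theorem ENNReal.tsum_mul_tsum_eq_tsum_sum_antidiagonal {A : Type*} [AddCommMonoid A]
    [HasAntidiagonal A] (f g : A → ℝ≥0∞) :
    (∑' n, f n) * ∑' n, g n = ∑' n, ∑ kl ∈ antidiagonal n, f kl.1 * g kl.2 := by
  calc (∑' n, f n) * ∑' n, g n = ∑' kl : A × A, f kl.1 * g kl.2 := by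
        rw [ENNReal.tsum_prod (f := fun k l => f k * g l), ← ENNReal.tsum_mul_right]
        exact tsum_congr fun k => ENNReal.tsum_mul_left.symm
    _ = ∑' x : Σ n : A, antidiagonal n, f x.2.1.1 * g x.2.1.2 :=
        (HasAntidiagonal.sigmaAntidiagonalEquivProd.tsum_eq _).symm
    _ = _ := by
        rw [ENNReal.tsum_sigma']
        exact tsum_congr fun n => Finset.tsum_subtype (antidiagonal n) (fun kl => f kl.1 * g kl.2)

section

variable {S : Type*} [DecidableEq S]

noncomputable def doobTransform (R : S → S → ℝ≥0∞) (h : S → ℝ≥0∞) (x y : S) : ℝ≥0∞ :=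
  R x y * h y / h x

theorem mul_qpow_doobTransform (R : S → S → ℝ≥0∞) {h : S → ℝ≥0∞} (hh0 : ∀ x, h x ≠ 0)
    (hhtop : ∀ x, h x ≠ ⊤) (n : ℕ) (x y : S) :
    h x * qpow (doobTransform R h) n x y = qpow R n x y * h y := by
  induction n generalizing x with
  | zero => by_cases hxy : x = y <;> simp [qpow, hxy]
  | succ n ih =>
    simp only [qpow, ← ENNReal.tsum_mul_left, ← ENNReal.tsum_mul_right]
    refine tsum_congr fun z => ?_
    calc h x * (doobTransform R h x z * qpow (doobTransform R h) n z y)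
        = R x z * (h x / h x) * (h z * qpow (doobTransform R h) n z y) := by
          simp only [doobTransform, div_eq_mul_inv]; ring
      _ = R x z * qpow R n z y * h y := by
          rw [ENNReal.div_self (hh0 x) (hhtop x), ih]; ring

theorem mul_green_doobTransform (R : S → S → ℝ≥0∞) {h : S → ℝ≥0∞} (hh0 : ∀ x, h x ≠ 0)
    (hhtop : ∀ x, h x ≠ ⊤) (x y : S) :
    h x * green (doobTransform R h) x y = green R x y * h y := by
  simp only [green, ← ENNReal.tsum_mul_left, ← ENNReal.tsum_mul_right,
    mul_qpow_doobTransform R hh0 hhtop]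

noncomputable def killedKer (Q : S → S → ℝ≥0∞) (B : Finset S) (x y : S) : ℝ≥0∞ :=
  if x ∈ B then 0 else Q x y

theorem phKer_eq_doobTransform (Q : S → S → ℝ≥0∞) (B : Finset S) (h : S → ℝ≥0∞) :
    phKer Q B h = doobTransform (killedKer Q B) h := by
  ext x y
  by_cases hx : x ∈ B <;> simp [phKer, doobTransform, killedKer, hx]

theorem qpow_killedKer_succ_of_mem (Q : S → S → ℝ≥0∞) {B : Finset S} {x : S} (hx : x ∈ B)
    (n : ℕ) (y : S) : qpow (killedKer Q B) (n + 1) x y = 0 := by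
  simp [qpow, killedKer, hx]

-- `p.1` is the time of the first visit to `B`, made at `z`; paths avoiding `B` end at `y ∉ B`.
theorem qpow_eq_first_entrance (Q : S → S → ℝ≥0∞) (B : Finset S) (n : ℕ) (x y : S) :
    qpow Q n x y = (if y ∈ B then 0 else qpow (killedKer Q B) n x y) +
      ∑ z ∈ B, ∑ p ∈ antidiagonal n, qpow (killedKer Q B) p.1 x z * qpow Q p.2 z y := by
  induction n generalizing x with
  | zero => by_cases hxy : x = y <;> by_cases hy : y ∈ B <;> simp [qpow, hxy, hy]
  | succ n ih =>
    simp only [Nat.sum_antidiagonal_succ]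
    by_cases hx : x ∈ B
    · simp [qpow_killedKer_succ_of_mem Q hx, qpow.eq_1, hx]
    -- from `x ∉ B` the first step is a step of `killedKer Q B`, and time `0` is not a visit to `B`
    have hK : ∀ z, killedKer Q B x z = Q x z := fun z => if_neg hx
    have hK0 : ∀ z ∈ B, qpow (killedKer Q B) 0 x z = 0 := fun z hz =>
      if_neg (ne_of_mem_of_not_mem hz hx).symm
    calc qpow Q (n + 1) x y = ∑' w, killedKer Q B x w * qpow Q n w y := by simp only [qpow, hK]
      _ = _ := by
        simp only [ih, mul_add, ENNReal.tsum_add, Finset.mul_sum]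
        rw [Finset.sum_congr rfl fun z hz => by rw [hK0 z hz, zero_mul, zero_add]]
        congr 1
        · split_ifs <;> simp [qpow]
        · simp only [Summable.tsum_finsetSum fun _ _ => ENNReal.summable, qpow, ← mul_assoc,
            ENNReal.tsum_mul_right]

theorem green_eq_first_entrance (Q : S → S → ℝ≥0∞) (B : Finset S) (x y : S) :
    green Q x y = (if y ∈ B then 0 else green (killedKer Q B) x y) +
      ∑ z ∈ B, green (killedKer Q B) x z * green Q z y := by
  simp only [green, qpow_eq_first_entrance Q B _ x y, ENNReal.tsum_add,
    Summable.tsum_finsetSum fun _ _ => ENNReal.summable]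
  congr 1
  · split_ifs <;> simp
  · refine Finset.sum_congr rfl fun z _ => ?_
    exact (ENNReal.tsum_mul_tsum_eq_tsum_sum_antidiagonal (qpow (killedKer Q B) · x z)
      (qpow Q · z y)).symm

end

theorem green_eq_hTransform_decomposition_general {S : Type*} [DecidableEq S]
    (Q : S → S → ℝ≥0∞) (B : Finset S)
    (h : S → ℝ≥0∞) (hh0 : ∀ x, 0 < h x) (hhfin : ∀ x, h x < ⊤)
    (hB : ∀ x ∈ B, h x = 1)
    (x : S) :
    ∀ y : S, green Q x y =
      (if y ∈ B then 0 else h x * green (phKer Q B h) x y / h y) +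
      ∑' z, (if z ∈ B then h x * green (phKer Q B h) x z * green Q z y else 0) := by
  intro y
  have hdoob : ∀ u, h x * green (phKer Q B h) x u = green (killedKer Q B) x u * h u := by
    rw [phKer_eq_doobTransform]
    exact mul_green_doobTransform _ (fun u => (hh0 u).ne') (fun u => (hhfin u).ne) x
  rw [green_eq_first_entrance Q B x y, tsum_eq_sum fun z hz => if_neg hz]
  congr 1
  · split_ifs
    · rfl
    · rw [hdoob, ENNReal.mul_div_cancel_right (hh0 y).ne' (hhfin y).ne]
  · refine Finset.sum_congr rfl fun z hz => ?_
    rw [if_pos hz, hdoob, hB z hz, mul_one]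

/-- with `μ^{(x)}(y) = h(x)·g_h(x,y)` (where `g_h` is the Green's function of
`p^h`), one has `G(x,y) = 1_{B^c}(y) μ^{(x)}(y)/h(y) + Σ_{z∈B} μ^{(x)}(z) G(z,y)`. -/
theorem green_eq_hTransform_decomposition {S : Type*} [Countable S] [DecidableEq S]
    (Q : S → S → ℝ≥0∞) (hG : ∀ x y, green Q x y < ⊤) (B : Finset S)
    (h : S → ℝ≥0∞) (hh0 : ∀ x, 0 < h x) (hhfin : ∀ x, h x < ⊤)
    (hB : ∀ x ∈ B, h x = 1) (hharm : ∀ x ∉ B, ∑' y, Q x y * h y = h x)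
    (x : S) (hx : x ∉ B) :
    ∀ y : S, green Q x y =
      (if y ∈ B then 0 else h x * green (phKer Q B h) x y / h y) +
      ∑' z, (if z ∈ B then h x * green (phKer Q B h) x z * green Q z y else 0) :=
  green_eq_hTransform_decomposition_general Q B h hh0 hhfin hB x
end

section
/- With the setup above, the measure ν defined by ν|_{B_n} = μ̄_{B_n} G|_{B_n×B_n} for each n is Q-excessive: Σ_{y∈S} ν(y) Q(y,x) ≤ ν(x) for every x ∈ S. -/
open scoped ENNReal

/-- The first-entrance kernel into `B`:
`E_B(x,y) = 1_B(y) Σ_{m≥0} Σ_{x_0=x,…,x_m=y, x_0,…,x_{m-1} ∉ B} Q(x_0,x_1)⋯Q(x_{m-1},x_m)`. -/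
noncomputable def entKer {S : Type*} [DecidableEq S] (Q : S → S → ℝ≥0∞) (B : Finset S)
    (x y : S) : ℝ≥0∞ :=
  if y ∈ B then ∑' (m : ℕ), qpow (fun u v => if u ∈ B then 0 else Q u v) m x y else 0

lemma qpow_mul_right {S : Type*} [DecidableEq S] (Q : S → S → ℝ≥0∞) :
    ∀ (n : ℕ) (z x : S), ∑' y, qpow Q n z y * Q y x = qpow Q (n + 1) z x := by
  intro n
  induction n with
  | zero =>
    intro z x
    have h1 : ∀ y : S, (if z = y then (1:ℝ≥0∞) else 0) * Q y x
        = if y = z then Q z x else 0 := by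
      intro y
      rcases eq_or_ne z y with h | h
      · subst h; simp
      · simp [h, Ne.symm h]
    have h2 : ∀ w : S, Q z w * (if w = x then (1:ℝ≥0∞) else 0)
        = if w = x then Q z x else 0 := by
      intro w
      rcases eq_or_ne w x with h | h
      · subst h; simp
      · simp [h]
    simp only [qpow, h1, h2, tsum_ite_eq]
  | succ n ih =>
    intro z x
    have : ∀ y : S, qpow Q (n + 1) z y * Q y x
        = ∑' w, Q z w * qpow Q n w y * Q y x := by
      intro y
      rw [show qpow Q (n+1) z y = ∑' w, Q z w * qpow Q n w y from rfl,
        ENNReal.tsum_mul_right]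
    calc ∑' y, qpow Q (n + 1) z y * Q y x
        = ∑' y, ∑' w, Q z w * qpow Q n w y * Q y x := by
          exact tsum_congr this
      _ = ∑' w, ∑' y, Q z w * qpow Q n w y * Q y x := ENNReal.tsum_comm
      _ = ∑' w, Q z w * ∑' y, qpow Q n w y * Q y x := by
          refine tsum_congr fun w => ?_
          simp_rw [mul_assoc]
          exact ENNReal.tsum_mul_left
      _ = ∑' w, Q z w * qpow Q (n + 1) w x := by
          exact tsum_congr fun w => by rw [ih w x]
      _ = qpow Q (n + 2) z x := rfl

lemma green_mul_le {S : Type*} [DecidableEq S] (Q : S → S → ℝ≥0∞) (z x : S) :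
    ∑' y, green Q z y * Q y x ≤ green Q z x := by
  calc ∑' y, green Q z y * Q y x
      = ∑' y, ∑' n, qpow Q n z y * Q y x := by
        refine tsum_congr fun y => ?_
        rw [green, ENNReal.tsum_mul_right]
    _ = ∑' (n : ℕ), ∑' y, qpow Q n z y * Q y x := ENNReal.tsum_comm
    _ = ∑' (n : ℕ), qpow Q (n + 1) z x := by
        exact tsum_congr fun n => qpow_mul_right Q n z x
    _ ≤ ∑' (n : ℕ), qpow Q n z x :=
        ENNReal.tsum_comp_le_tsum_of_injective Nat.succ_injective _
    _ = green Q z x := rfl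

lemma Bn_mono' {S : Type*} (Bn : ℕ → Finset S) (hmono : ∀ n, Bn n ⊆ Bn (n + 1)) :
    ∀ {m n : ℕ}, m ≤ n → Bn m ⊆ Bn n := by
  intro m n h
  induction h with
  | refl => exact Finset.Subset.refl _
  | step h ih => exact ih.trans (hmono _)

/-- the measure `ν` determined by `ν|_{B_n} = μ̄_{B_n} G|_{B_n×B_n}` for a
consistent entrance family is `Q`-excessive. -/
theorem entranceFamily_limit_excessive {S : Type*} [Countable S] [DecidableEq S]
    (Q : S → S → ℝ≥0∞) (hG : ∀ x y, green Q x y < ⊤)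
    (Bn : ℕ → Finset S) (hmono : ∀ n, Bn n ⊆ Bn (n + 1)) (hcover : ∀ x : S, ∃ n, x ∈ Bn n)
    (μbar : ℕ → S → ℝ≥0∞)
    (hsupp : ∀ n, ∀ y ∉ Bn n, μbar n y = 0)
    (hfin : ∀ n, ∑' y, μbar n y < ⊤)
    (hcons : ∀ n y, μbar n y = ∑' x, μbar (n + 1) x * entKer Q (Bn n) x y)
    (ν : S → ℝ≥0∞)
    (hν : ∀ n, ∀ x ∈ Bn n, ν x = ∑ z ∈ Bn n, μbar n z * green Q z x) :
    ∀ x, ∑' y, ν y * Q y x ≤ ν x := by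
  intro x
  obtain ⟨N, hxN⟩ := hcover x
  -- key estimate for each n with x ∈ Bn n
  have key : ∀ n, x ∈ Bn n → ∑ y ∈ Bn n, ν y * Q y x ≤ ν x := by
    intro n hxn
    have hsum : ∑ y ∈ Bn n, ν y * Q y x
        = ∑ z ∈ Bn n, μbar n z * ∑ y ∈ Bn n, green Q z y * Q y x := by
      calc ∑ y ∈ Bn n, ν y * Q y x
          = ∑ y ∈ Bn n, (∑ z ∈ Bn n, μbar n z * green Q z y) * Q y x := by
            exact Finset.sum_congr rfl fun y hy => by rw [hν n y hy]
        _ = ∑ y ∈ Bn n, ∑ z ∈ Bn n, μbar n z * green Q z y * Q y x := by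
            exact Finset.sum_congr rfl fun y _ => Finset.sum_mul ..
        _ = ∑ z ∈ Bn n, ∑ y ∈ Bn n, μbar n z * green Q z y * Q y x :=
            Finset.sum_comm
        _ = ∑ z ∈ Bn n, μbar n z * ∑ y ∈ Bn n, green Q z y * Q y x := by
            refine Finset.sum_congr rfl fun z _ => ?_
            rw [Finset.mul_sum]
            exact Finset.sum_congr rfl fun y _ => by ring
    rw [hsum, hν n x hxn]
    refine Finset.sum_le_sum fun z _ => ?_
    refine mul_le_mul_right ?_ _
    calc ∑ y ∈ Bn n, green Q z y * Q y x
        ≤ ∑' y, green Q z y * Q y x := ENNReal.sum_le_tsum _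
      _ ≤ green Q z x := green_mul_le Q z x
  -- pass to the tsum via finite subsets
  rw [ENNReal.tsum_eq_iSup_sum]
  refine iSup_le fun F => ?_
  -- find a common n containing F and x
  have hF : ∃ n, ↑F ⊆ (Bn n : Set S) ∧ x ∈ Bn n := by
    classical
    induction F using Finset.induction with
    | empty => exact ⟨N, by simp, hxN⟩
    | @insert a s hne ih =>
      obtain ⟨m, hm, hxm⟩ := ih
      obtain ⟨k, hk⟩ := hcover a
      refine ⟨max m k, ?_, Bn_mono' Bn hmono (le_max_left m k) hxm⟩
      intro y hy
      rcases Finset.mem_insert.mp hy with rfl | hy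
      · exact Bn_mono' Bn hmono (le_max_right m k) hk
      · exact Bn_mono' Bn hmono (le_max_left m k) (hm hy)
  obtain ⟨n, hFn, hxn⟩ := hF
  calc ∑ y ∈ F, ν y * Q y x
      ≤ ∑ y ∈ Bn n, ν y * Q y x := by
        refine Finset.sum_le_sum_of_subset fun y hy => hFn hy
    _ ≤ ν x := key n hxn
end

section
/- Let Q be a symmetric nonnegative matrix on countable S with finite Green's function G. If Σ_{k=1}^∞ k·sup_{z∈S} (Q^k)(0,z) < ∞ for a fixed base point 0 ∈ S, then, setting h(z) = G(z,0)/G(0,0) (so that by symmetry h(z) = G(0,z)/G(0,0)), there exist a decreasing summable sequence (a_ρ) and ρ : S → ℕ₀ such that Σ_{m=0}^{ρ(z)} (Q^m)(0,z) ≥ h(z)·G(0,0)/2 and h(z)·G(0,0) ≤ 2·a_{ρ(z)} for all z ∈ S; namely a_ρ = Σ_{m≥ρ} sup_{z'} (Q^m)(0,z') works (with the convention a_0 ≥ 1 after replacing a_0 by max(a_0,1)), and Σ_ρ a_ρ = Σ_k (k+1) sup_z (Q^k)(0,z) < ∞. -/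
open scoped ENNReal

namespace ENNReal

noncomputable def tailSum (b : ℕ → ℝ≥0∞) (n : ℕ) : ℝ≥0∞ :=
  ∑' k, b (k + n)

variable (b : ℕ → ℝ≥0∞)

theorem tailSum_eq_tsum_ite (n : ℕ) : tailSum b n = ∑' m, if n ≤ m then b m else 0 := by
  rw [← Summable.sum_add_tsum_nat_add' (k := n) ENNReal.summable,
    Finset.sum_eq_zero fun m hm => if_neg (by simpa using hm), zero_add]
  exact tsum_congr fun k => (if_pos (Nat.le_add_left n k)).symm

theorem tailSum_eq_add_tailSum_succ (n : ℕ) : tailSum b n = b n + tailSum b (n + 1) := by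
  rw [tailSum, tsum_eq_zero_add' ENNReal.summable]
  simp only [tailSum, zero_add, add_right_comm _ 1 n, add_assoc]

theorem tailSum_antitone : Antitone (tailSum b) :=
  antitone_nat_of_succ_le fun n => (tailSum_eq_add_tailSum_succ b n).symm ▸ le_add_self

theorem tsum_tailSum : ∑' n, tailSum b n = ∑' k, (k + 1) * b k := by
  simp_rw [tailSum_eq_tsum_ite]
  rw [ENNReal.tsum_comm]
  refine tsum_congr fun k => ?_
  rw [tsum_eq_sum (s := Finset.range (k + 1)) (by simp +contextual),
    Finset.sum_congr rfl fun n hn => if_pos (Nat.lt_succ_iff.mp (Finset.mem_range.mp hn))]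
  simp

theorem tsum_le_add_tsum_nat_mul : ∑' k, b k ≤ b 0 + ∑' k, k * b k := by
  rw [tsum_eq_zero_add' ENNReal.summable, tsum_eq_zero_add' (f := fun k : ℕ => k * b k)
    ENNReal.summable, Nat.cast_zero, zero_mul, zero_add]
  gcongr with k
  exact le_mul_of_one_le_left' (by simp)

theorem tsum_tailSum_lt_top (hb : ∑' k, b k ≠ ∞) (h : ∑' k, k * b k ≠ ∞) :
    ∑' n, tailSum b n < ∞ := by
  simp_rw [tsum_tailSum, add_mul, one_mul, ENNReal.tsum_add]
  exact add_lt_top.2 ⟨h.lt_top, hb.lt_top⟩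

theorem exists_half_tsum_le_sum_range_and_tsum_le_two_mul_tailSum {f : ℕ → ℝ≥0∞}
    (hfb : f ≤ b) (hb : ∑' k, b k ≠ ∞) :
    ∃ ρ, (∑' m, f m) / 2 ≤ ∑ m ∈ Finset.range (ρ + 1), f m ∧
      ∑' m, f m ≤ 2 * tailSum b ρ := by
  set c := ∑' m, f m
  rcases eq_or_ne c 0 with hc | hc
  · exact ⟨0, by simp [hc]⟩
  have hcb : c ≤ tailSum b 0 := ENNReal.tsum_le_tsum fun m => by simpa using hfb m
  have hc_half : c / 2 ≠ ∞ := div_ne_top (ne_top_of_le_ne_top hb hcb) two_ne_zero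
  have hex : ∃ n, tailSum b (n + 1) ≤ c / 2 := by
    have hpos : 0 < c / 2 := ENNReal.div_pos hc ofNat_ne_top
    obtain ⟨n, hn⟩ := ((ENNReal.tendsto_sum_nat_add b hb).eventually_lt_const hpos).exists
    exact ⟨n, (tailSum_antitone b n.le_succ).trans hn.le⟩
  refine ⟨Nat.find hex, ?_, ?_⟩
  · have htail : ∑' i, f (i + (Nat.find hex + 1)) ≤ c / 2 :=
      (ENNReal.tsum_le_tsum fun i => hfb _).trans (Nat.find_spec hex)
    refine ENNReal.le_of_add_le_add_right hc_half ?_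
    rw [ENNReal.add_halves]
    calc c = _ := (Summable.sum_add_tsum_nat_add' (k := Nat.find hex + 1) ENNReal.summable).symm
      _ ≤ _ := by gcongr
  · have hlower : c / 2 ≤ tailSum b (Nat.find hex) := by
      match h : Nat.find hex with
      | 0 => exact ENNReal.half_le_self.trans hcb
      | m + 1 => exact (not_le.1 (Nat.find_min hex (h ▸ m.lt_succ_self))).le
    exact (ENNReal.div_le_iff' two_ne_zero ofNat_ne_top).1 hlower

end ENNReal

theorem decorability_criterion_general {S : Type*} [DecidableEq S]
    (Q : S → S → ℝ≥0∞) (o : S)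
    (hsum : ∑' (k : ℕ), (k : ℝ≥0∞) * ⨆ z : S, qpow Q k o z < ⊤) :
    ∃ (a : ℕ → ℝ≥0∞) (ρ : S → ℕ), Antitone a ∧ (∑' n, a n < ⊤) ∧
      ∀ z : S,
        green Q o z / 2 ≤ ∑ m ∈ Finset.range (ρ z + 1), qpow Q m o z ∧
        green Q o z ≤ 2 * a (ρ z) := by
  set b : ℕ → ℝ≥0∞ := fun k => ⨆ z, qpow Q k o z
  have hb0 : b 0 ≤ 1 := iSup_le fun z => by
    simp only [qpow]
    exact ite_le_one le_rfl zero_le_one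
  have hb : ∑' k, b k ≠ ∞ := ((ENNReal.tsum_le_add_tsum_nat_mul b).trans_lt
    (ENNReal.add_lt_top.2 ⟨hb0.trans_lt ENNReal.one_lt_top, hsum⟩)).ne
  choose ρ hρ using fun z => ENNReal.exists_half_tsum_le_sum_range_and_tsum_le_two_mul_tailSum b
    (f := fun m => qpow Q m o z) (fun m => le_iSup (qpow Q m o ·) z) hb
  exact ⟨ENNReal.tailSum b, ρ, ENNReal.tailSum_antitone b,
    ENNReal.tsum_tailSum_lt_top b hb hsum.ne, hρ⟩

/-- for symmetric `Q` with `Σ_k k·sup_z (Q^k)(0,z) < ∞`, there are a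
decreasing summable sequence `(a_ρ)` and `ρ : S → ℕ` with
`Σ_{m=0}^{ρ(z)} (Q^m)(0,z) ≥ G(0,z)/2` and `G(0,z) ≤ 2 a_{ρ(z)}`
(note `h(z)·G(0,0) = G(0,z)` by symmetry). -/
theorem decorability_criterion {S : Type*} [Countable S] [DecidableEq S]
    (Q : S → S → ℝ≥0∞) (o : S)
    (hsym : ∀ x y, Q x y = Q y x)
    (hG : ∀ x y, green Q x y < ⊤)
    (hsum : ∑' (k : ℕ), (k : ℝ≥0∞) * ⨆ z : S, qpow Q k o z < ⊤) :
    ∃ (a : ℕ → ℝ≥0∞) (ρ : S → ℕ), Antitone a ∧ (∑' n, a n < ⊤) ∧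
      ∀ z : S,
        green Q o z / 2 ≤ ∑ m ∈ Finset.range (ρ z + 1), qpow Q m o z ∧
        green Q o z ≤ 2 * a (ρ z) :=
  decorability_criterion_general Q o hsum
end
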